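/- If {B_1,...,B_m} is an (n,m,K,a,λ)-SWEDF over an abelian group G, then for every nonzero δ ∈ G, Σ_{i=1}^m N_i(δ)/k_i = λ/k̃, where N_i(δ) = #{(b_i, b_j) : b_i ∈ B_i, b_j ∈ ⋃_{t≠i} B_t, b_j − b_i = δ}, k_i = |B_i|, and k̃ = lcm(k_1,...,k_m). In other words, an (n,m,K,a,λ)-SWEDF is an (n,m,K,d)-RWEDF with d = λ/k̃. -/

import Mathlib

/-!
Counting `δ` in `⋃_{i ≠ j} D(B_i, B̃_j)` block by block, the blocks with second
argument `B̃_i` contribute `(k̃ / k_i) · N_i(δ)`, so the SWEDF condition reads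
`Σ_i (k̃ / k_i) N_i(δ) = λ`. Since every `k_i` divides `k̃`, dividing by `k̃` gives
`Σ_i N_i(δ) / k_i = λ / k̃`.
-/

def extDiff {G : Type*} [Sub G] (X Y : Multiset G) : Multiset G :=
  X.bind fun x => Y.map fun y => x - y

/-- The multiset `⋃_{i ≠ j} D(B_i, B̃_j)`, where the standard weighted multiset `B̃_j`
repeats each element of `B_j` exactly `ktil / |B_j|` times. -/
def wtotal {G : Type*} [Sub G] {m : ℕ} (B : Fin m → Finset G) (ktil : ℕ) : Multiset G :=
  ∑ i : Fin m, ∑ j : Fin m,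
    if i ≠ j then extDiff (B i).val ((ktil / (B j).card) • (B j).val) else 0

section Counting

variable {G : Type*} [Sub G] [DecidableEq G]

lemma count_extDiff_nsmul (X Y : Multiset G) (c : ℕ) (δ : G) :
    (extDiff X (c • Y)).count δ = c * (extDiff X Y).count δ := by
  simp [extDiff, Multiset.count_bind, Multiset.map_nsmul, Multiset.count_nsmul,
    Multiset.sum_map_mul_left]

lemma count_wtotal {m : ℕ} (B : Fin m → Finset G) (ktil : ℕ) (δ : G) :
    (wtotal B ktil).count δ =
      ∑ i : Fin m, ktil / (B i).card *
        ∑ j : Fin m, if j ≠ i then (extDiff (B j).val (B i).val).count δ else 0 := by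
  simp only [wtotal, Multiset.count_sum', apply_ite (Multiset.count δ),
    count_extDiff_nsmul, Multiset.count_zero]
  rw [Finset.sum_comm]
  simp only [Finset.mul_sum, mul_ite, mul_zero]

end Counting

lemma sum_div_eq_div_of_sum_div_mul_eq {ι K : Type*} [Field K] [CharZero K]
    (s : Finset ι) (c N : ι → ℕ) {k L : ℕ} (hk : k ≠ 0) (hc : ∀ i ∈ s, c i ∣ k)
    (h : ∑ i ∈ s, k / c i * N i = L) :
    ∑ i ∈ s, (N i : K) / c i = L / k := by
  rw [eq_div_iff (Nat.cast_ne_zero.mpr hk), Finset.sum_mul, ← h, Nat.cast_sum]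
  refine Finset.sum_congr rfl fun i hi => ?_
  have hci : (c i : K) ≠ 0 := Nat.cast_ne_zero.mpr (ne_zero_of_dvd_ne_zero hk (hc i hi))
  rw [Nat.cast_mul, Nat.cast_div (hc i hi) hci]
  field_simp

theorem stmt19_general {G : Type*} [AddCommGroup G] [DecidableEq G]
    (m : ℕ)
    (B : Fin m → Finset G)
    (hne : ∀ i, (B i).Nonempty)
    (ktil : ℕ)
    (hktil : ktil = Finset.univ.lcm fun i => (B i).card)
    (lam : ℕ)
    (hSWEDF : ∀ δ : G, δ ≠ 0 → Multiset.count δ (wtotal B ktil) = lam) :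
    ∀ δ : G, δ ≠ 0 →
      ∑ i : Fin m,
        ((∑ j : Fin m, if j ≠ i then
            Multiset.count δ (extDiff (B j).val (B i).val) else 0 : ℕ) : ℚ) /
          (B i).card = (lam : ℚ) / ktil := by
  intro δ hδ
  have hdvd : ∀ i ∈ Finset.univ, (B i).card ∣ ktil := fun i hi =>
    hktil ▸ Finset.dvd_lcm hi
  have hktil0 : ktil ≠ 0 := by
    rw [hktil, Ne, Finset.lcm_eq_zero_iff]
    rintro ⟨i, -, hi⟩
    exact (hne i).card_ne_zero hi
  exact sum_div_eq_div_of_sum_div_mul_eq _ _ _ hktil0 hdvd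
    ((count_wtotal B ktil δ).symm.trans (hSWEDF δ hδ))

/-- An `(n,m,K,a,λ)`-SWEDF is an `(n,m,K,d)`-RWEDF with `d = λ/k̃`:
for every nonzero `δ`, `Σ_i N_i(δ)/k_i = λ/k̃`. -/
theorem stmt19 {G : Type*} [AddCommGroup G] [Fintype G] [DecidableEq G]
    (n m : ℕ) (hn : Fintype.card G = n)
    (B : Fin m → Finset G)
    (hdisj : ∀ i j, i ≠ j → Disjoint (B i) (B j))
    (hne : ∀ i, (B i).Nonempty)
    (a ktil : ℕ) (ha : a = ∑ i, (B i).card)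
    (hktil : ktil = Finset.univ.lcm fun i => (B i).card)
    (lam : ℕ) (hlampos : 0 < lam)
    (hSWEDF : ∀ δ : G, δ ≠ 0 → Multiset.count δ (wtotal B ktil) = lam) :
    ∀ δ : G, δ ≠ 0 →
      ∑ i : Fin m,
        ((∑ j : Fin m, if j ≠ i then
            Multiset.count δ (extDiff (B j).val (B i).val) else 0 : ℕ) : ℚ) /
          (B i).card = (lam : ℚ) / ktil :=
  stmt19_general m B hne ktil hktil lam hSWEDF
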